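/- arXiv:2011.09341 — 2 statements merged into one kernel-verified Lean document; each statement's English description precedes it below -/
import Mathlib

section
/- For every φ ∈ C_c^∞(ℝ^d) one has ∫ φ(x)² |∇U(x)|² dπ(x) ≤ 16 ∫ |∇φ(x)|² dπ(x) + 4 C_U d^{1+ω} ∫ φ(x)² dπ(x). -/
open MeasureTheory Real
open scoped RealInnerProductSpace

/-- The Laplacian of `U`, defined as the sum of second partial derivatives. -/
noncomputable def lapl (d : ℕ) (U : EuclideanSpace ℝ (Fin d) → ℝ)
    (x : EuclideanSpace ℝ (Fin d)) : ℝ :=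
  ∑ i : Fin d,
    fderiv ℝ (fun y => fderiv ℝ U y (EuclideanSpace.single i 1)) x (EuclideanSpace.single i 1)

/-- The Gibbs probability measure `π` with density `Z⁻¹ e^{-U}` w.r.t. Lebesgue measure. -/
noncomputable def gibbs (d : ℕ) (U : EuclideanSpace ℝ (Fin d) → ℝ) (Z : ℝ) :
    Measure (EuclideanSpace ℝ (Fin d)) :=
  volume.withDensity (fun x => ENNReal.ofReal (Real.exp (-U x) / Z))

/-- Squared Frobenius norm of the Hessian of `u`. -/
noncomputable def hessFS (d : ℕ) (u : EuclideanSpace ℝ (Fin d) → ℝ)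
    (x : EuclideanSpace ℝ (Fin d)) : ℝ :=
  ∑ i : Fin d, ∑ j : Fin d,
    (fderiv ℝ (fun y => fderiv ℝ u y (EuclideanSpace.single j 1)) x
      (EuclideanSpace.single i 1)) ^ 2

/-- Divergence of a vector field `F`. -/
noncomputable def diverg (d : ℕ)
    (F : EuclideanSpace ℝ (Fin d) → EuclideanSpace ℝ (Fin d))
    (x : EuclideanSpace ℝ (Fin d)) : ℝ :=
  ∑ i : Fin d, fderiv ℝ (fun y => F y i) x (EuclideanSpace.single i 1)

/-!
Weighted integration by parts against `e^{-U}` turns `∫ φ² (∂ᵢU)² e^{-U}` into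
`∫ (2 φ ∂ᵢφ ∂ᵢU + φ² ∂ᵢ²U) e^{-U}`; summing over `i` gives
`∫ φ² |∇U|² dπ = ∫ (2 φ ⟪∇φ, ∇U⟫ + φ² ΔU) dπ`. Young's inequality
`2 φ ⟪∇φ, ∇U⟫ ≤ 4 |∇φ|² + φ² |∇U|² / 4` and the hypothesis on `ΔU` bound the right-hand side
by `4 ∫ |∇φ|² dπ + C_U d^{1+ω} ∫ φ² dπ + (3/4) ∫ φ² |∇U|² dπ`; absorb the last term.
-/

theorem ContDiff.fderiv_right_apply {E F : Type*} [NormedAddCommGroup E] [NormedSpace ℝ E]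
    [NormedAddCommGroup F] [NormedSpace ℝ F] {U : E → F} {m n : WithTop ℕ∞}
    (hU : ContDiff ℝ n U) (hmn : m + 1 ≤ n) (v : E) :
    ContDiff ℝ m (fderiv ℝ U · v) :=
  (hU.fderiv_right hmn).clm_apply contDiff_const

section WeightedIntegrationByParts

variable {E : Type*} [NormedAddCommGroup E] [NormedSpace ℝ E] [FiniteDimensional ℝ E]
  [MeasurableSpace E] [BorelSpace E] {μ : Measure E} [μ.IsAddHaarMeasure]

theorem integral_mul_fderiv_mul_exp_neg {U f : E → ℝ} (hU : ContDiff ℝ 1 U)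
    (hf : ContDiff ℝ 1 f) (hfc : HasCompactSupport f) (v : E) :
    ∫ x, f x * fderiv ℝ U x v * exp (-U x) ∂μ = ∫ x, fderiv ℝ f x v * exp (-U x) ∂μ := by
  have hUd : Differentiable ℝ U := hU.differentiable one_ne_zero
  have hfd : Differentiable ℝ f := hf.differentiable one_ne_zero
  have hderiv (x : E) :
      fderiv ℝ (fun y => exp (-U y)) x v = -(exp (-U x) * fderiv ℝ U x v) := by
    have : HasFDerivAt (fun y => exp (-U y)) (exp (-U x) • -fderiv ℝ U x) x :=
      (hUd x).hasFDerivAt.neg.exp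
    simp [this.fderiv]
  have hUc : Continuous U := hU.continuous
  have hfc' : Continuous f := hf.continuous
  have hDU : Continuous (fderiv ℝ U · v) :=
    (hU.continuous_fderiv one_ne_zero).clm_apply continuous_const
  have hDf : Continuous (fderiv ℝ f · v) :=
    (hf.continuous_fderiv one_ne_zero).clm_apply continuous_const
  have ibp := integral_mul_fderiv_eq_neg_fderiv_mul_of_integrable (μ := μ) (v := v)
    (f := f) (g := fun y => exp (-U y))
    ((by fun_prop : Continuous _).integrable_of_hasCompactSupport
      (hfc.fderiv_apply (𝕜 := ℝ) v).mul_right)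
    (by
      simp_rw [hderiv]
      exact (by fun_prop : Continuous _).integrable_of_hasCompactSupport hfc.mul_right)
    ((by fun_prop : Continuous _).integrable_of_hasCompactSupport hfc.mul_right)
    (fun x _ => hfd x) (fun x _ => ((hUd x).neg.exp))
  simp_rw [hderiv, mul_neg, integral_neg, neg_inj] at ibp
  rw [← ibp]
  congr 1 with x
  ring

theorem integral_sq_mul_fderiv_sq_mul_exp_neg {U φ : E → ℝ} (hU : ContDiff ℝ 2 U)
    (hφ : ContDiff ℝ 1 φ) (hφc : HasCompactSupport φ) (v : E) :
    ∫ x, φ x ^ 2 * fderiv ℝ U x v ^ 2 * exp (-U x) ∂μ =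
      ∫ x, (2 * φ x * fderiv ℝ φ x v * fderiv ℝ U x v
        + φ x ^ 2 * fderiv ℝ (fderiv ℝ U · v) x v) * exp (-U x) ∂μ := by
  have hW : ContDiff ℝ 1 (fderiv ℝ U · v) := hU.fderiv_right_apply le_rfl v
  have hφ2c : HasCompactSupport (fun x => φ x ^ 2) :=
    hφc.comp_left (g := fun t : ℝ => t ^ 2) (zero_pow two_ne_zero)
  have hprod (x : E) : fderiv ℝ (fun y => φ y ^ 2 * fderiv ℝ U y v) x v
      = 2 * φ x * fderiv ℝ φ x v * fderiv ℝ U x v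
        + φ x ^ 2 * fderiv ℝ (fderiv ℝ U · v) x v := by
    have h : HasFDerivAt (fun y => φ y ^ 2 * fderiv ℝ U y v) _ x :=
      ((hφ.differentiable one_ne_zero x).hasFDerivAt.pow 2).mul
        (hW.differentiable one_ne_zero x).hasFDerivAt
    rw [h.fderiv]
    simp only [Nat.add_one_sub_one, pow_one, nsmul_eq_mul, Nat.cast_ofNat, add_apply,
      smul_apply, smul_eq_mul]
    ring
  have h := integral_mul_fderiv_mul_exp_neg (μ := μ) (hU.of_le one_le_two)
    ((hφ.pow 2).mul hW) hφ2c.mul_right v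
  simp only [hprod] at h
  rw [← h]
  congr 1 with x
  ring

end WeightedIntegrationByParts

theorem Continuous.integrable_of_vanishing_with {α F G : Type*} [TopologicalSpace α]
    [MeasurableSpace α] [OpensMeasurableSpace α] {μ : Measure α} [IsFiniteMeasureOnCompacts μ]
    [Zero F] [NormedAddCommGroup G] {f : α → F} {g : α → G} (hg : Continuous g)
    (hf : HasCompactSupport f) (hfg : ∀ x, f x = 0 → g x = 0) : Integrable g μ :=
  hg.integrable_of_hasCompactSupport <| hf.mono <|
    Function.support_subset_iff'.2 fun x hx => hfg x (Function.notMem_support.1 hx)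

theorem two_mul_inner_add_sq_mul_le {F : Type*} [NormedAddCommGroup F] [InnerProductSpace ℝ F]
    (a b : F) {t L K : ℝ} (hL : L ≤ K + ‖b‖ ^ 2 / 2) :
    2 * t * ⟪a, b⟫ + t ^ 2 * L ≤ 4 * ‖a‖ ^ 2 + K * t ^ 2 + 3 / 4 * (t ^ 2 * ‖b‖ ^ 2) := by
  have hinner : t * ⟪a, b⟫ ≤ |t| * (‖a‖ * ‖b‖) :=
    calc t * ⟪a, b⟫ ≤ |t| * |⟪a, b⟫| := (le_abs_self _).trans_eq (abs_mul _ _)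
      _ ≤ |t| * (‖a‖ * ‖b‖) := mul_le_mul_of_nonneg_left (abs_real_inner_le_norm a b) (abs_nonneg t)
  nlinarith [sq_nonneg (2 * ‖a‖ - |t| * ‖b‖ / 2), sq_abs t,
    mul_le_mul_of_nonneg_left hL (sq_nonneg t)]

section Euclidean

variable {d : ℕ} {μ : Measure (EuclideanSpace ℝ (Fin d))} [μ.IsAddHaarMeasure]

theorem fderiv_single_eq_gradient (f : EuclideanSpace ℝ (Fin d) → ℝ)
    (x : EuclideanSpace ℝ (Fin d)) (i : Fin d) :
    fderiv ℝ f x (EuclideanSpace.single i 1) = gradient f x i := by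
  rw [← InnerProductSpace.toDual_symm_apply, ← gradient, EuclideanSpace.inner_single_right]
  simp

theorem ContDiff.continuous_gradient {f : EuclideanSpace ℝ (Fin d) → ℝ} (hf : ContDiff ℝ 1 f) :
    Continuous (gradient f) :=
  (InnerProductSpace.toDual ℝ _).symm.continuous.comp (hf.continuous_fderiv one_ne_zero)

theorem HasCompactSupport.gradient {f : EuclideanSpace ℝ (Fin d) → ℝ} (hf : HasCompactSupport f) :
    HasCompactSupport (gradient f) :=
  (hf.fderiv ℝ).comp_left (g := (InnerProductSpace.toDual ℝ _).symm) (map_zero _)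

theorem ContDiff.continuous_lapl {U : EuclideanSpace ℝ (Fin d) → ℝ} (hU : ContDiff ℝ 2 U) :
    Continuous (lapl d U) :=
  continuous_finsetSum _ fun _ _ =>
    ((hU.fderiv_right_apply le_rfl _).continuous_fderiv one_ne_zero).clm_apply continuous_const

theorem integral_sq_mul_norm_gradient_sq_mul_exp_neg {U φ : EuclideanSpace ℝ (Fin d) → ℝ}
    (hU : ContDiff ℝ 2 U) (hφ : ContDiff ℝ 1 φ) (hφc : HasCompactSupport φ) :
    ∫ x, φ x ^ 2 * ‖gradient U x‖ ^ 2 * exp (-U x) ∂μ =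
      ∫ x, (2 * φ x * ⟪gradient φ x, gradient U x⟫ + φ x ^ 2 * lapl d U x) * exp (-U x) ∂μ := by
  set e : Fin d → EuclideanSpace ℝ (Fin d) := fun i => EuclideanSpace.single i 1
  have hUc : Continuous U := hU.continuous
  have hφc' : Continuous φ := hφ.continuous
  have hDU (i : Fin d) : Continuous (fderiv ℝ U · (e i)) :=
    (hU.continuous_fderiv two_ne_zero).clm_apply continuous_const
  have hDφ (i : Fin d) : Continuous (fderiv ℝ φ · (e i)) :=
    (hφ.continuous_fderiv one_ne_zero).clm_apply continuous_const
  have hD2U (i : Fin d) : Continuous (fun x => fderiv ℝ (fderiv ℝ U · (e i)) x (e i)) :=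
    ((hU.fderiv_right_apply le_rfl _).continuous_fderiv one_ne_zero).clm_apply continuous_const
  calc ∫ x, φ x ^ 2 * ‖gradient U x‖ ^ 2 * exp (-U x) ∂μ
      = ∑ i, ∫ x, φ x ^ 2 * fderiv ℝ U x (e i) ^ 2 * exp (-U x) ∂μ := by
        rw [← integral_finsetSum _ fun i _ =>
          (by fun_prop : Continuous _).integrable_of_vanishing_with hφc (by simp_all)]
        simp only [EuclideanSpace.real_norm_sq_eq, fderiv_single_eq_gradient, e,
          Finset.mul_sum, Finset.sum_mul]
    _ = ∑ i, ∫ x, (2 * φ x * fderiv ℝ φ x (e i) * fderiv ℝ U x (e i)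
          + φ x ^ 2 * fderiv ℝ (fderiv ℝ U · (e i)) x (e i)) * exp (-U x) ∂μ :=
        Finset.sum_congr rfl fun i _ => integral_sq_mul_fderiv_sq_mul_exp_neg hU hφ hφc (e i)
    _ = _ := by
        rw [← integral_finsetSum _ fun i _ =>
          (by fun_prop : Continuous _).integrable_of_vanishing_with hφc (by simp_all)]
        congr 1 with x
        simp only [lapl, PiLp.inner_apply, RCLike.inner_apply, conj_trivial, e,
          fderiv_single_eq_gradient, Finset.mul_sum, Finset.sum_mul, ← Finset.sum_add_distrib]
        exact Finset.sum_congr rfl fun i _ => by ring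

theorem integral_sq_mul_norm_gradient_sq_mul_exp_neg_le {U φ : EuclideanSpace ℝ (Fin d) → ℝ}
    (hU : ContDiff ℝ 2 U) (hφ : ContDiff ℝ 1 φ) (hφc : HasCompactSupport φ) {K : ℝ}
    (hLap : ∀ x, lapl d U x ≤ K + ‖gradient U x‖ ^ 2 / 2) :
    ∫ x, φ x ^ 2 * ‖gradient U x‖ ^ 2 * exp (-U x) ∂μ
      ≤ 16 * ∫ x, ‖gradient φ x‖ ^ 2 * exp (-U x) ∂μ
        + 4 * K * ∫ x, φ x ^ 2 * exp (-U x) ∂μ := by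
  have hUc : Continuous U := hU.continuous
  have hφc' : Continuous φ := hφ.continuous
  have hGU : Continuous (gradient U) := (hU.of_le one_le_two).continuous_gradient
  have hGφ : Continuous (gradient φ) := hφ.continuous_gradient
  have hΔU : Continuous (lapl d U) := hU.continuous_lapl
  set A := ∫ x, φ x ^ 2 * ‖gradient U x‖ ^ 2 * exp (-U x) ∂μ
  set B := ∫ x, ‖gradient φ x‖ ^ 2 * exp (-U x) ∂μ
  set C := ∫ x, φ x ^ 2 * exp (-U x) ∂μ
  have hA : Integrable (fun x => φ x ^ 2 * ‖gradient U x‖ ^ 2 * exp (-U x)) μ :=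
    (by fun_prop : Continuous _).integrable_of_vanishing_with hφc (by simp_all)
  have hB : Integrable (fun x => ‖gradient φ x‖ ^ 2 * exp (-U x)) μ :=
    (by fun_prop : Continuous _).integrable_of_vanishing_with hφc.gradient (by simp_all)
  have hC : Integrable (fun x => φ x ^ 2 * exp (-U x)) μ :=
    (by fun_prop : Continuous _).integrable_of_vanishing_with hφc (by simp_all)
  have hBC : Integrable
      (fun x => 4 * (‖gradient φ x‖ ^ 2 * exp (-U x)) + K * (φ x ^ 2 * exp (-U x))) μ :=
    (hB.const_mul 4).add (hC.const_mul K)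
  have hA_le : A ≤ 4 * B + K * C + 3 / 4 * A :=
    calc A = ∫ x, (2 * φ x * ⟪gradient φ x, gradient U x⟫ + φ x ^ 2 * lapl d U x)
            * exp (-U x) ∂μ := integral_sq_mul_norm_gradient_sq_mul_exp_neg hU hφ hφc
      _ ≤ ∫ x, 4 * (‖gradient φ x‖ ^ 2 * exp (-U x)) + K * (φ x ^ 2 * exp (-U x))
            + 3 / 4 * (φ x ^ 2 * ‖gradient U x‖ ^ 2 * exp (-U x)) ∂μ := by
        refine integral_mono
          ((by fun_prop : Continuous _).integrable_of_vanishing_with hφc (by simp_all))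
          (hBC.add (hA.const_mul _)) fun x => ?_
        have h := mul_le_mul_of_nonneg_right
          (two_mul_inner_add_sq_mul_le (gradient φ x) (gradient U x) (t := φ x) (hLap x))
          (exp_pos (-U x)).le
        linarith
      _ = 4 * B + K * C + 3 / 4 * A := by
        rw [integral_add hBC (hA.const_mul _),
          integral_add (hB.const_mul 4) (hC.const_mul K), integral_const_mul,
          integral_const_mul, integral_const_mul]
  linarith

end Euclidean

-- The factor is `Z⁻¹` for `Z > 0` and `0` otherwise, when the density vanishes.
theorem integral_gibbs {d : ℕ} {U : EuclideanSpace ℝ (Fin d) → ℝ} (hU : Continuous U) (Z : ℝ)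
    (g : EuclideanSpace ℝ (Fin d) → ℝ) :
    ∫ x, g x ∂gibbs d U Z = (ENNReal.ofReal Z⁻¹).toReal * ∫ x, g x * exp (-U x) := by
  rw [gibbs, integral_withDensity_eq_integral_toReal_smul (by fun_prop)
    (ae_of_all _ fun _ => ENNReal.ofReal_lt_top), ← integral_const_mul]
  congr 1 with x
  rw [div_eq_mul_inv, ENNReal.ofReal_mul (exp_pos _).le, ENNReal.toReal_mul,
    ENNReal.toReal_ofReal (exp_pos _).le, smul_eq_mul]
  ring

theorem stmt2_general (d : ℕ) (U : EuclideanSpace ℝ (Fin d) → ℝ)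
    (hU : ContDiff ℝ 2 U)
    (Z : ℝ)
    (C_U ω : ℝ)
    (hLap : ∀ x, lapl d U x ≤ C_U * (d : ℝ) ^ ((1 : ℝ) + ω) + ‖gradient U x‖ ^ 2 / 2)
    (φ : EuclideanSpace ℝ (Fin d) → ℝ)
    (hφ : ContDiff ℝ (⊤ : ℕ∞) φ) (hφc : HasCompactSupport φ) :
    ∫ x, (φ x) ^ 2 * ‖gradient U x‖ ^ 2 ∂(gibbs d U Z)
      ≤ 16 * ∫ x, ‖gradient φ x‖ ^ 2 ∂(gibbs d U Z)
        + 4 * C_U * (d : ℝ) ^ ((1 : ℝ) + ω) * ∫ x, (φ x) ^ 2 ∂(gibbs d U Z) := by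
  have key := integral_sq_mul_norm_gradient_sq_mul_exp_neg_le (μ := volume) hU
    (hφ.of_le (by exact_mod_cast le_top)) hφc hLap
  simp only [integral_gibbs hU.continuous]
  calc _ ≤ (ENNReal.ofReal Z⁻¹).toReal * (16 * (∫ x, ‖gradient φ x‖ ^ 2 * exp (-U x))
          + 4 * (C_U * (d : ℝ) ^ ((1 : ℝ) + ω)) * ∫ x, φ x ^ 2 * exp (-U x)) :=
        mul_le_mul_of_nonneg_left key ENNReal.toReal_nonneg
    _ = _ := by ring

/-- Under `ΔU ≤ C_U d^{1+ω} + |∇U|²/2`, for `φ ∈ C_c^∞(ℝ^d)`: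
`∫ φ²|∇U|² dπ ≤ 16 ∫ |∇φ|² dπ + 4 C_U d^{1+ω} ∫ φ² dπ`. -/
theorem stmt2 (d : ℕ) (hd : 1 ≤ d) (U : EuclideanSpace ℝ (Fin d) → ℝ)
    (hU : ContDiff ℝ 2 U)
    (hIntU : Integrable (fun x => Real.exp (-U x)))
    (Z : ℝ) (hZ : Z = ∫ x, Real.exp (-U x))
    (C_U ω : ℝ) (hCU : 0 < C_U) (hω : 0 ≤ ω)
    (hLap : ∀ x, lapl d U x ≤ C_U * (d : ℝ) ^ ((1 : ℝ) + ω) + ‖gradient U x‖ ^ 2 / 2)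
    (φ : EuclideanSpace ℝ (Fin d) → ℝ)
    (hφ : ContDiff ℝ (⊤ : ℕ∞) φ) (hφc : HasCompactSupport φ) :
    ∫ x, (φ x) ^ 2 * ‖gradient U x‖ ^ 2 ∂(gibbs d U Z)
      ≤ 16 * ∫ x, ‖gradient φ x‖ ^ 2 ∂(gibbs d U Z)
        + 4 * C_U * (d : ℝ) ^ ((1 : ℝ) + ω) * ∫ x, (φ x) ^ 2 ∂(gibbs d U Z) :=
  stmt2_general d U hU Z C_U ω hLap φ hφ hφc
end

section
/- Let τ > 0, c ≥ 1 and c₂ > 0. Then there exist C > 0 and t₀ ≥ 2 such that for all t ≥ t₀, inf{ r ∈ (0,1) : c₂ t ≥ c² (1 + r^{−τ})² log(1/r) } ≤ C ( log t / t )^{1/(2τ)}. In particular, the infimum is attained below a quantity of order t^{−1/(2τ)} up to a logarithmic factor. -/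
open Real Filter

/-! Take `r = u ^ (1 / (2τ))` with `u = A log t / t`. Then `r ^ (-τ) = u ^ (-1/2)`, so
`(1 + r ^ (-τ))² ≤ 4 / u`, and `log (1 / r) = log (1 / u) / (2τ) ≤ log t / (2τ)`; hence the
constraint at `r` is at most `2 c² t / (τ A)`, which is `≤ c₂ t` once `A ≥ 2 c² / (τ c₂)`.
Since `log t = o(t)`, such a `u` lies in `(0, 1)` for large `t`, so `r` is admissible and bounds
the infimum by `A ^ (1 / (2τ)) (log t / t) ^ (1 / (2τ))`. -/

lemma one_add_rpow_neg_half_sq_le {u : ℝ} (hu₀ : 0 < u) (hu₁ : u ≤ 1) :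
    (1 + u ^ (-(1 / 2) : ℝ)) ^ 2 ≤ 4 / u := by
  have hx : 1 ≤ u ^ (-(1 / 2) : ℝ) := one_le_rpow_of_pos_of_le_one_of_nonpos hu₀ hu₁ (by norm_num)
  have hx_sq : (u ^ (-(1 / 2) : ℝ)) ^ 2 = 1 / u := by
    rw [← rpow_natCast, ← rpow_mul hu₀.le]
    norm_num [rpow_neg_one]
  rw [show 4 / u = 4 * (1 / u) by ring, ← hx_sq]
  nlinarith

lemma mul_one_add_rpow_neg_sq_mul_log_le {τ u : ℝ} (hτ : 0 < τ) (hu₀ : 0 < u) (hu₁ : u ≤ 1)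
    (c : ℝ) :
    c ^ 2 * (1 + (u ^ (1 / (2 * τ))) ^ (-τ)) ^ 2 * log (1 / u ^ (1 / (2 * τ)))
      ≤ 2 * c ^ 2 / τ * (log (1 / u) / u) := by
  have h_pow : (u ^ (1 / (2 * τ))) ^ (-τ) = u ^ (-(1 / 2) : ℝ) := by
    rw [← rpow_mul hu₀.le]
    congr 1
    field_simp
  have h_log : log (1 / u ^ (1 / (2 * τ))) = log (1 / u) / (2 * τ) := by
    rw [one_div, log_inv, log_rpow hu₀, one_div u, log_inv]
    ring
  have h_log_nonneg : 0 ≤ log (1 / u) := log_nonneg (one_le_one_div hu₀ hu₁)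
  rw [h_pow, h_log]
  calc c ^ 2 * (1 + u ^ (-(1 / 2) : ℝ)) ^ 2 * (log (1 / u) / (2 * τ))
      ≤ c ^ 2 * (4 / u) * (log (1 / u) / (2 * τ)) := by
        gcongr
        exact one_add_rpow_neg_half_sq_le hu₀ hu₁
    _ = 2 * c ^ 2 / τ * (log (1 / u) / u) := by
        field_simp
        ring

lemma log_one_div_div_self_le {A t : ℝ} (hA : 0 < A) (ht : 0 < t) (h : 1 ≤ A * log t) :
    log (1 / (A * log t / t)) / (A * log t / t) ≤ t / A := by
  have hAlog : 0 < A * log t := by linarith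
  have hlog : 0 < log t := pos_of_mul_pos_right hAlog hA.le
  have h_log_le : log (1 / (A * log t / t)) ≤ log t := by
    rw [one_div_div, log_div ht.ne' hAlog.ne']
    linarith [log_nonneg h]
  calc log (1 / (A * log t / t)) / (A * log t / t)
      ≤ log t / (A * log t / t) := by gcongr
    _ = t / A := by
        field_simp

lemma mul_one_add_rpow_neg_sq_mul_log_le_at {τ c c₂ A t : ℝ} (hτ : 0 < τ) (hA : 0 < A)
    (hA_ge : 2 * c ^ 2 / τ ≤ c₂ * A) (ht : 0 < t) (h_ge : 1 ≤ A * log t) (h_le : A * log t ≤ t) :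
    c ^ 2 * (1 + ((A * log t / t) ^ (1 / (2 * τ))) ^ (-τ)) ^ 2
        * log (1 / (A * log t / t) ^ (1 / (2 * τ))) ≤ c₂ * t := by
  have hu₀ : 0 < A * log t / t := div_pos (by linarith) ht
  have hu₁ : A * log t / t ≤ 1 := (div_le_one ht).2 h_le
  calc _ ≤ 2 * c ^ 2 / τ * (log (1 / (A * log t / t)) / (A * log t / t)) :=
        mul_one_add_rpow_neg_sq_mul_log_le hτ hu₀ hu₁ c
    _ ≤ c₂ * A * (t / A) :=
        mul_le_mul hA_ge (log_one_div_div_self_le hA ht h_ge)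
          (div_nonneg (log_nonneg (one_le_one_div hu₀ hu₁)) hu₀.le) (le_trans (by positivity) hA_ge)
    _ = c₂ * t := by field_simp

lemma eventually_mul_log_le_half {A : ℝ} (hA : 0 < A) :
    ∀ᶠ t in atTop, A * log t ≤ t / 2 := by
  filter_upwards [isLittleO_log_id_atTop.bound (div_pos one_pos (mul_pos two_pos hA)),
    eventually_ge_atTop 1] with t h_small ht
  rw [norm_of_nonneg (log_nonneg ht), id, norm_of_nonneg (by linarith)] at h_small
  calc A * log t ≤ A * (1 / (2 * A) * t) := by gcongr
    _ = t / 2 := by field_simp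

theorem stmt18_general (τ c c₂ : ℝ) (hτ : 0 < τ) (hc₂ : 0 < c₂) :
    ∃ C > 0, ∃ t₀ : ℝ, 2 ≤ t₀ ∧ ∀ t ≥ t₀,
      sInf {r : ℝ | r ∈ Set.Ioo (0 : ℝ) 1 ∧
          c ^ 2 * (1 + r ^ (-τ)) ^ 2 * Real.log (1 / r) ≤ c₂ * t}
        ≤ C * (Real.log t / t) ^ (1 / (2 * τ)) := by
  set A : ℝ := max 1 (2 * c ^ 2 / (τ * c₂))
  have hA_one : 1 ≤ A := le_max_left _ _
  have hA : 0 < A := zero_lt_one.trans_le hA_one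
  have hA_ge : 2 * c ^ 2 / τ ≤ c₂ * A := by
    rw [div_le_iff₀ hτ]
    linarith [(div_le_iff₀ (mul_pos hτ hc₂)).1 (le_max_right 1 (2 * c ^ 2 / (τ * c₂)))]
  obtain ⟨t₁, h_Alog_le⟩ := eventually_atTop.1 (eventually_mul_log_le_half hA)
  refine ⟨A ^ (1 / (2 * τ)), by positivity, max 3 t₁, le_max_of_le_left (by norm_num),
    fun t ht => ?_⟩
  have ht₃ : 3 ≤ t := le_of_max_le_left ht
  have h_log_ge : 1 ≤ log t := by
    rw [le_log_iff_exp_le (by linarith)]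
    linarith [exp_one_lt_d9]
  have h_Alog_le := h_Alog_le t (le_of_max_le_right ht)
  have hu₀ : 0 < A * log t / t := by positivity
  have hu₁ : A * log t / t < 1 := by rw [div_lt_one (by linarith)]; linarith
  calc _ ≤ (A * log t / t) ^ (1 / (2 * τ)) :=
        csInf_le ⟨0, fun r hr => hr.1.1.le⟩
          (by exact ⟨⟨by positivity, rpow_lt_one hu₀.le hu₁ (by positivity)⟩,
            mul_one_add_rpow_neg_sq_mul_log_le_at hτ hA hA_ge (by linarith) (by nlinarith)
              (by linarith)⟩)
    _ = _ := by rw [mul_div_assoc, mul_rpow hA.le (by positivity)]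

/-- Rate computation for the polynomial decay: for `α₁(r) = c(1 + r^{−τ})`, the quantity
`inf{ r ∈ (0,1) : c₂ t ≥ c²(1 + r^{−τ})² log(1/r) }` is eventually bounded by
`C (log t / t)^{1/(2τ)}`. -/
theorem stmt18 (τ c c₂ : ℝ) (hτ : 0 < τ) (hc : 1 ≤ c) (hc₂ : 0 < c₂) :
    ∃ C > 0, ∃ t₀ : ℝ, 2 ≤ t₀ ∧ ∀ t ≥ t₀,
      sInf {r : ℝ | r ∈ Set.Ioo (0 : ℝ) 1 ∧
          c ^ 2 * (1 + r ^ (-τ)) ^ 2 * Real.log (1 / r) ≤ c₂ * t}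
        ≤ C * (Real.log t / t) ^ (1 / (2 * τ)) :=
  stmt18_general τ c c₂ hτ hc₂
end
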